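/- arXiv:math/0608259 — 2 statements merged into one kernel-verified Lean document; each statement's English description precedes it below -/
import Mathlib

section
/- A subshift X ⊆ Σ^ℤ admits a presentation with property g — that is, there exists a subshift X̃ topologically conjugate to X such that X̃ has property g — if and only if X has property RI. -/
open Set Filter Topology

/-! Basic symbolic dynamics notions.

* The alphabet is a nonempty finite type `A` with the discrete topology; `A^ℤ` and `A^ℕ`
  carry the product topology.
* A left-infinite sequence `x⁻ = (x_i)_{i ≤ 0}` is encoded as `u : ℕ → A` with `u n = x (-n)`.
* Finite words are lists, read left to right.
-/

/-- The shift `S`. -/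
def shiftMap {A : Type*} (x : ℤ → A) : ℤ → A := fun i => x (i + 1)

/-- A subshift: a nonempty closed shift-invariant subset of `A^ℤ`. -/
def IsSubshift {A : Type*} [TopologicalSpace A] (X : Set (ℤ → A)) : Prop :=
  X.Nonempty ∧ IsClosed X ∧ shiftMap '' X = X

/-- `X⁻`: the left-infinite rays of points of `X` (encoded via `u n = x (-n)`). -/
def Xminus {A : Type*} (X : Set (ℤ → A)) : Set (ℕ → A) :=
  {u | ∃ x ∈ X, ∀ n : ℕ, u n = x (-(n : ℤ))}

/-- The word `w` occurs in `x` (as a block of consecutive coordinates). -/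
def Occurs {A : Type*} (w : List A) (x : ℤ → A) : Prop :=
  ∃ i : ℤ, ∀ j : Fin w.length, x (i + ((j : ℕ) : ℤ)) = w.get j

/-- A finite word is admissible for `X` if it occurs in some point of `X`. -/
def Admissible {A : Type*} (X : Set (ℤ → A)) (w : List A) : Prop :=
  ∃ x ∈ X, Occurs w x

/-- The left ray `u` ends in the word `w`, i.e. `(x_{-k},…,x_0) = w` where `|w| = k+1`. -/
def EndsIn {A : Type*} (u : ℕ → A) (w : List A) : Prop :=
  ∀ j : Fin w.length, u (w.length - 1 - (j : ℕ)) = w.get j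

/-- `Γ₁⁺(x⁻)`: the letters that can follow the left ray `u` in `X`. -/
def Gamma1 {A : Type*} (X : Set (ℤ → A)) (u : ℕ → A) : Set A :=
  {σ | ∃ x ∈ X, (∀ n : ℕ, x (-(n : ℤ)) = u n) ∧ x 1 = σ}

/-- `x` carries the word `b` on the coordinate interval `[-(|b| - 1), 0]`. -/
def EndsAtZero {A : Type*} (x : ℤ → A) (b : List A) : Prop :=
  ∀ j : Fin b.length, x (((j : ℕ) : ℤ) - ((b.length : ℤ) - 1)) = b.get j

/-- `c ∈ ω⁺(b)`: every point of `X` carrying `b` ending at coordinate `0` can be modified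
on the positive coordinates so as to continue with the word `c`. -/
def OmegaWord {A : Type*} (X : Set (ℤ → A)) (b c : List A) : Prop :=
  ∀ x ∈ X, EndsAtZero x b →
    ∃ x' ∈ X, (∀ i : ℤ, i ≤ 0 → x' i = x i) ∧
      ∀ j : Fin c.length, x' (((j : ℕ) : ℤ) + 1) = c.get j

/-- `ω₁⁺(b)`. -/
def omega1 {A : Type*} (X : Set (ℤ → A)) (b : List A) : Set A :=
  {σ | OmegaWord X b [σ]}

/-- The word `(x_{-n},…,x_0)` read off the left ray `u`. -/
def lastWord {A : Type*} (u : ℕ → A) (n : ℕ) : List A :=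
  List.ofFn fun j : Fin (n + 1) => u (n - (j : ℕ))

/-- `Δ₁⁺(x⁻) = ⋃ₙ ω₁⁺((x_{-n},…,x_0))`. -/
def Delta1 {A : Type*} (X : Set (ℤ → A)) (u : ℕ → A) : Set A :=
  ⋃ n : ℕ, omega1 X (lastWord u n)

/-- Property g: `Δ₁⁺(x⁻) ≠ ∅` for every `x⁻ ∈ X⁻`. -/
def PropertyG {A : Type*} (X : Set (ℤ → A)) : Prop :=
  ∀ u ∈ Xminus X, (Delta1 X u).Nonempty

/-- A g-function for `X`, encoded as a total function `g : (ℕ → A) → A → ℝ`: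
continuity (of the restriction to the graph of `Γ₁⁺`, i.e. of the map on
`{(x⁻,σ) : σ ∈ Γ₁⁺(x⁻)}`), values in `[0,1]` there, and the normalization
`∑_{σ ∈ Γ₁⁺(x⁻)} g (x⁻, σ) = 1`. -/
def IsGFunction {A : Type*} [Fintype A] [TopologicalSpace A] (X : Set (ℤ → A))
    (g : (ℕ → A) → A → ℝ) : Prop :=
  ContinuousOn (fun p : (ℕ → A) × A => g p.1 p.2)
      {p : (ℕ → A) × A | p.1 ∈ Xminus X ∧ p.2 ∈ Gamma1 X p.1} ∧
  (∀ u ∈ Xminus X, ∀ σ ∈ Gamma1 X u, g u σ ∈ Set.Icc (0 : ℝ) 1) ∧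
  (∀ u ∈ Xminus X, ∑ σ : A, (Gamma1 X u).indicator (g u) σ = 1)

/-- Property (D): for every admissible word `b` and letter `σ` with `bσ` admissible there
is a word `a` with `ab` admissible and `σ ∈ ω₁⁺(ab)`. -/
def PropertyD {A : Type*} (X : Set (ℤ → A)) : Prop :=
  ∀ (b : List A) (σ : A), b ≠ [] → Admissible X (b ++ [σ]) →
    ∃ a : List A, a ≠ [] ∧ Admissible X (a ++ b) ∧ σ ∈ omega1 X (a ++ b)

/-- Topological conjugacy: a homeomorphism between the subshifts commuting with the
shifts. -/
def Conjugate {A B : Type*} [TopologicalSpace A] [TopologicalSpace B]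
    (X : Set (ℤ → A)) (Y : Set (ℤ → B)) : Prop :=
  ∃ φ : X ≃ₜ Y, ∀ (x : X) (hx : shiftMap x.1 ∈ X),
    (φ ⟨shiftMap x.1, hx⟩).1 = shiftMap (φ x).1

/-- `Ψ` is an RI-mapping for `X` with window `[-L, L]`, i.e. it satisfies conditions
(RIa) and (RIb).  Blocks `(x_{-L},…,x_L) ∈ X_{[-L,L]}` are encoded as functions
`Fin (2L+1) → A` (index `j` corresponding to coordinate `j - L`), words
`(x_1,…,x_{L+1}) ∈ X_{[1,L+1]}` as functions `Fin (L+1) → A`, and blocks of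
`X_{[-L-n,L]}` as functions `Fin (2L+n+1) → A` (index `j` corresponding to coordinate
`j - L - n`). -/
def IsRIMap {A : Type*} (X : Set (ℤ → A)) (L : ℕ)
    (Ψ : (Fin (2 * L + 1) → A) → (Fin (L + 1) → A)) : Prop :=
  (∀ x ∈ X, ∃ x' ∈ X, (∀ i : ℤ, i ≤ 0 → x' i = x i) ∧
      ∀ j : Fin (L + 1),
        x' (((j : ℕ) : ℤ) + 1) =
          Ψ (fun i : Fin (2 * L + 1) => x (((i : ℕ) : ℤ) - (L : ℤ))) j) ∧
  (∀ n : ℕ, n < L → ∀ b : Fin (2 * L + n + 1) → A,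
      (∃ x ∈ X, ∀ j : Fin (2 * L + n + 1), x (((j : ℕ) : ℤ) - (L : ℤ) - (n : ℤ)) = b j) →
      Ψ (fun j : Fin (2 * L + 1) =>
            if h : (j : ℕ) ≤ L + n then b ⟨(j : ℕ), by have := j.isLt; omega⟩
            else
              Ψ (fun i : Fin (2 * L + 1) => b ⟨n + (i : ℕ), by have := i.isLt; omega⟩)
                ⟨(j : ℕ) - (L + n) - 1, by have := j.isLt; omega⟩) =
        Ψ (fun j : Fin (2 * L + 1) => b ⟨(j : ℕ), by have := j.isLt; omega⟩))

/-- Property RI: `X` has an RI-mapping for some window size `L`. -/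
def PropertyRI {A : Type*} (X : Set (ℤ → A)) : Prop :=
  ∃ (L : ℕ) (Ψ : (Fin (2 * L + 1) → A) → (Fin (L + 1) → A)), IsRIMap X L Ψ

/-!
If `Ψ` is an RI-mapping with window `L`, recode every point letter by letter as
`i ↦ (x_i, Ψ (x_{[i-L, i+L]}))`. The first coordinate inverts this, so it is a conjugacy, and the
recoded subshift has property g at depth `L`: by (RIa) a past can be continued by the word its
last recoded letter predicts, and by (RIb) this continuation does not change the recoded past,
so the next recoded letter only depends on the last `L + 1` recoded letters.

Conversely, by compactness property g of `Y` holds at a uniform depth `N`. Choosing one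
admissible next letter for every word of length `N + 1` and iterating continues each point of
`Y` to the right so that its first `K` new letters only depend on `y_{[-N, 0]}`. A conjugacy is a
sliding block code, and after shifting it reads only the future while its inverse reads only
the past. Pulling the continuation of `Y` back to `X` along it gives a continuation `F` of the
points of `X` whose values on `[1, L + 1]` only depend on `x_{[-L, L]}` and which is unchanged
when applied again to a shift of its own output; reading off these values is an RI-mapping.
-/

open Function

section ShiftBy

variable {A : Type*}

def shiftBy (k : ℤ) (x : ℤ → A) : ℤ → A := fun i => x (i + k)

@[simp] lemma shiftBy_apply (k i : ℤ) (x : ℤ → A) : shiftBy k x i = x (i + k) := rfl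

lemma shiftBy_shiftBy (k l : ℤ) (x : ℤ → A) :
    shiftBy k (shiftBy l x) = shiftBy (k + l) x := by
  funext i; simp [add_assoc]

@[simp] lemma shiftBy_zero (x : ℤ → A) : shiftBy 0 x = x := by
  funext i; simp

lemma shiftBy_neg_shiftBy (k : ℤ) (x : ℤ → A) : shiftBy (-k) (shiftBy k x) = x := by
  simp [shiftBy_shiftBy]

lemma shiftBy_shiftBy_neg (k : ℤ) (x : ℤ → A) : shiftBy k (shiftBy (-k) x) = x := by
  simp [shiftBy_shiftBy]

lemma shiftMap_eq_shiftBy (x : ℤ → A) : shiftMap x = shiftBy 1 x := rfl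

lemma IsSubshift.shiftBy_mem [TopologicalSpace A] {X : Set (ℤ → A)} (hX : IsSubshift X)
    (k : ℤ) {x : ℤ → A} (hx : x ∈ X) : shiftBy k x ∈ X := by
  have hsucc : ∀ y ∈ X, shiftBy 1 y ∈ X := fun y hy => hX.2.2 ▸ mem_image_of_mem _ hy
  have hpred : ∀ y ∈ X, shiftBy (-1) y ∈ X := by
    intro y hy
    obtain ⟨z, hz, rfl⟩ := hX.2.2.symm ▸ hy
    rwa [shiftMap_eq_shiftBy, shiftBy_neg_shiftBy]
  induction k using Int.induction_on with
  | zero => rwa [shiftBy_zero]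
  | succ n ih => rw [add_comm, ← shiftBy_shiftBy]; exact hsucc _ ih
  | pred n ih => rw [sub_eq_neg_add, ← shiftBy_shiftBy]; exact hpred _ ih

end ShiftBy

section Equivariant

variable {A B : Type*} [TopologicalSpace A] {X : Set (ℤ → A)} {Y : Set (ℤ → B)}

def ShiftEquivariant (f : X → Y) : Prop :=
  ∀ (k : ℤ) (x x' : X), x'.1 = shiftBy k x.1 → (f x').1 = shiftBy k (f x).1

lemma shiftEquivariant_of_commute (hX : IsSubshift X) {f : X → Y}
    (hf : ∀ (x : X) (hx : shiftMap x.1 ∈ X), (f ⟨shiftMap x.1, hx⟩).1 = shiftMap (f x).1) :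
    ShiftEquivariant f := by
  have hnat : ∀ (m : ℕ) (x x' : X), x'.1 = shiftBy m x.1 → (f x').1 = shiftBy m (f x).1 := by
    intro m
    induction m with
    | zero =>
      intro x x' h
      simp only [Nat.cast_zero, shiftBy_zero] at h ⊢
      rw [Subtype.ext h]
    | succ m ih =>
      intro x x' h
      let z : X := ⟨shiftBy m x.1, hX.shiftBy_mem m x.2⟩
      have hz : shiftMap z.1 = x'.1 := by
        rw [h, shiftMap_eq_shiftBy, shiftBy_shiftBy]; congr 1; push_cast; ring
      rw [show x' = ⟨shiftMap z.1, hz ▸ x'.2⟩ from Subtype.ext hz.symm, hf z, ih x z rfl,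
        shiftMap_eq_shiftBy, shiftBy_shiftBy]
      congr 1; push_cast; ring
  intro k x x' h
  obtain ⟨m, rfl | rfl⟩ := Int.eq_nat_or_neg k
  · exact hnat m x x' h
  · have := hnat m x' x (by rw [h, shiftBy_shiftBy_neg])
    rw [this, shiftBy_neg_shiftBy]

lemma ShiftEquivariant.symm [TopologicalSpace B] (hX : IsSubshift X) {φ : X ≃ₜ Y}
    (hφ : ShiftEquivariant φ) : ShiftEquivariant φ.symm := by
  intro k y y' h
  let z : X := ⟨shiftBy k (φ.symm y).1, hX.shiftBy_mem k (φ.symm y).2⟩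
  have : φ z = y' := Subtype.ext (by rw [hφ k (φ.symm y) z rfl, h, φ.apply_symm_apply])
  rw [← this, φ.symm_apply_apply]

end Equivariant

section Locality

variable {A B : Type*} [TopologicalSpace A] [DiscreteTopology A] [Finite A]
  [TopologicalSpace B] [DiscreteTopology B]

lemma exists_radius_of_continuous {X : Set (ℤ → A)} (hX : IsClosed X) {f : X → B}
    (hf : Continuous f) :
    ∃ r : ℕ, ∀ x x' : X, EqOn x.1 x'.1 (Icc (-r) r) → f x = f x' := by
  have : CompactSpace X := isCompact_iff_compactSpace.mp hX.isCompact
  let V : ℕ → Set (X × X) := fun n => ⋃ i ∈ Icc (-(n : ℤ)) n, {p | p.1.1 i ≠ p.2.1 i}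
  have hVopen : ∀ n, IsOpen (V n) := fun n =>
    isOpen_biUnion fun i _ => isOpen_ne_fun
      ((continuous_apply i).comp (continuous_subtype_val.comp continuous_fst))
      ((continuous_apply i).comp (continuous_subtype_val.comp continuous_snd))
  have hVmono : Monotone V := fun m n hmn =>
    biUnion_subset_biUnion_left (Icc_subset_Icc (by omega) (by omega))
  have hK : IsCompact {p : X × X | f p.1 ≠ f p.2} :=
    ((isClosed_discrete {q : B × B | q.1 ≠ q.2}).preimage
      ((hf.comp continuous_fst).prodMk (hf.comp continuous_snd))).isCompact
  have hcover : {p : X × X | f p.1 ≠ f p.2} ⊆ ⋃ n, V n := by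
    intro p hp
    obtain ⟨i, hi⟩ : ∃ i, p.1.1 i ≠ p.2.1 i := by
      by_contra! h
      exact hp (congrArg f (Subtype.ext (funext h)))
    exact mem_iUnion.mpr ⟨i.natAbs, mem_biUnion (mem_Icc.mpr ⟨by omega, by omega⟩) hi⟩
  obtain ⟨r, hr⟩ := hK.elim_directed_cover V hVopen hcover hVmono.directed_le
  refine ⟨r, fun x x' hxx' => by_contra fun hne => ?_⟩
  obtain ⟨i, hi, hne'⟩ := mem_iUnion₂.mp (hr (show (x, x') ∈ _ from hne))
  exact hne' (hxx' hi)

lemma ShiftEquivariant.exists_radius {X : Set (ℤ → A)} {Y : Set (ℤ → B)} (hX : IsSubshift X)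
    {f : X → Y} (hf : Continuous f) (hshift : ShiftEquivariant f) :
    ∃ r : ℕ, ∀ (x x' : X) (i : ℤ),
      EqOn x.1 x'.1 (Icc (i - r) (i + r)) → (f x).1 i = (f x').1 i := by
  obtain ⟨r, hr⟩ := exists_radius_of_continuous hX.2.1 (f := fun x => (f x).1 0)
    ((continuous_apply 0).comp (continuous_subtype_val.comp hf))
  refine ⟨r, fun x x' i hxx' => ?_⟩
  let z : X := ⟨shiftBy i x.1, hX.shiftBy_mem i x.2⟩
  let z' : X := ⟨shiftBy i x'.1, hX.shiftBy_mem i x'.2⟩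
  have key : (f z).1 0 = (f z').1 0 :=
    hr z z' fun j hj => hxx' ⟨by simp at hj ⊢; omega, by simp at hj ⊢; omega⟩
  simpa [z, z', hshift i x z rfl, hshift i x' z' rfl] using key

end Locality

section OneSided

variable {A B : Type*}

structure OneSidedConjugacy (X : Set (ℤ → A)) (Y : Set (ℤ → B)) (s : ℕ) where
  toFun : (ℤ → A) → (ℤ → B)
  invFun : (ℤ → B) → (ℤ → A)
  mapsTo_toFun : MapsTo toFun X Y
  mapsTo_invFun : MapsTo invFun Y X
  left_inv : ∀ x ∈ X, invFun (toFun x) = x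
  right_inv : ∀ y ∈ Y, toFun (invFun y) = y
  toFun_shiftBy : ∀ x ∈ X, ∀ k, toFun (shiftBy k x) = shiftBy k (toFun x)
  toFun_apply_eq :
    ∀ x ∈ X, ∀ x' ∈ X, ∀ i, EqOn x x' (Icc i (i + s)) → toFun x i = toFun x' i
  invFun_apply_eq :
    ∀ y ∈ Y, ∀ y' ∈ Y, ∀ i, EqOn y y' (Icc (i - s) i) → invFun y i = invFun y' i

variable [TopologicalSpace A] [DiscreteTopology A] [Finite A]
  [TopologicalSpace B] [DiscreteTopology B] [Finite B] {X : Set (ℤ → A)} {Y : Set (ℤ → B)}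

lemma Conjugate.exists_oneSidedConjugacy (hX : IsSubshift X) (hY : IsSubshift Y)
    (h : Conjugate X Y) : ∃ s, Nonempty (OneSidedConjugacy X Y s) := by
  classical
  obtain ⟨φ, hφ⟩ := h
  have hφ' := shiftEquivariant_of_commute hX hφ
  obtain ⟨r₁, hr₁⟩ := hφ'.exists_radius hX φ.continuous
  obtain ⟨r₂, hr₂⟩ := (hφ'.symm hX).exists_radius hY φ.symm.continuous
  obtain ⟨x₀, -⟩ := hX.1
  obtain ⟨y₀, -⟩ := hY.1
  set r := max r₁ r₂
  have hr : (r₁ : ℤ) ≤ r ∧ (r₂ : ℤ) ≤ r := by omega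
  -- shifting by `r` makes `Φ` read only `[i, i + 2r]` and `Ψ` only `[i - 2r, i]`
  let Φ : (ℤ → A) → (ℤ → B) := fun x =>
    if hx : x ∈ X then shiftBy r (φ ⟨x, hx⟩).1 else y₀
  let Ψ : (ℤ → B) → (ℤ → A) := fun y =>
    if hy : y ∈ Y then (φ.symm ⟨shiftBy (-r) y, hY.shiftBy_mem _ hy⟩).1 else x₀
  have hΦ : ∀ x (hx : x ∈ X), Φ x = shiftBy r (φ ⟨x, hx⟩).1 := fun x hx => dif_pos hx
  have hΨ : ∀ y (hy : y ∈ Y), Ψ y = (φ.symm ⟨shiftBy (-r) y, hY.shiftBy_mem _ hy⟩).1 :=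
    fun y hy => dif_pos hy
  have hΦY : MapsTo Φ X Y := fun x hx => by rw [hΦ x hx]; exact hY.shiftBy_mem _ (φ _).2
  refine ⟨2 * r, ⟨
    { toFun := Φ, invFun := Ψ, mapsTo_toFun := hΦY, mapsTo_invFun := ?_, left_inv := ?_,
      right_inv := ?_, toFun_shiftBy := ?_, toFun_apply_eq := ?_, invFun_apply_eq := ?_ }⟩⟩
  · intro y hy
    rw [hΨ y hy]; exact (φ.symm _).2
  · intro x hx
    have e : (⟨shiftBy (-r) (Φ x), hY.shiftBy_mem _ (hΦY hx)⟩ : Y) = φ ⟨x, hx⟩ :=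
      Subtype.ext (by simp only [hΦ x hx, shiftBy_neg_shiftBy])
    rw [hΨ _ (hΦY hx), e, φ.symm_apply_apply]
  · intro y hy
    rw [hΨ y hy, hΦ _ (φ.symm _).2, Subtype.coe_eta, φ.apply_symm_apply, shiftBy_shiftBy_neg]
  · intro x hx k
    rw [hΦ _ (hX.shiftBy_mem k hx), hΦ x hx, hφ' k ⟨x, hx⟩ _ rfl, shiftBy_shiftBy,
      shiftBy_shiftBy, add_comm]
  · intro x hx x' hx' i hxx'
    rw [hΦ x hx, hΦ x' hx']
    exact hr₁ ⟨x, hx⟩ ⟨x', hx'⟩ (i + r) fun j hj =>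
      hxx' ⟨by simp at hj; omega, by simp at hj; omega⟩
  · intro y hy y' hy' i hyy'
    rw [hΨ y hy, hΨ y' hy']
    exact hr₂ _ _ i fun j hj => hyy' ⟨by simp at hj; omega, by simp at hj; omega⟩

end OneSided

section Continuation

variable {A : Type*}

lemma endsAtZero_lastWord_iff (y : ℤ → A) (u : ℕ → A) (n : ℕ) :
    EndsAtZero y (lastWord u n) ↔ ∀ k ≤ n, y (-k) = u k := by
  simp only [EndsAtZero, lastWord, List.length_ofFn, List.get_ofFn]
  constructor
  · intro h k hk
    simpa [show ((n - k : ℕ) : ℤ) - n = -k by omega, show n - (n - k) = k by omega]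
      using h ⟨n - k, by simp⟩
  · intro h j
    have hj := j.isLt
    simp only [List.length_ofFn] at hj
    simpa [show -((n - j : ℕ) : ℤ) = j - n by omega] using h (n - j) (by omega)

structure IsRightContinuation (X : Set (ℤ → A)) (W I : Set ℤ)
    (F : (ℤ → A) → (ℤ → A)) : Prop where
  mapsTo : MapsTo F X X
  eqOn_Iic : ∀ x ∈ X, EqOn (F x) x (Iic 0)
  eqOn_of_eqOn : ∀ x ∈ X, ∀ x' ∈ X, EqOn x x' W → EqOn (F x) (F x') I

variable {Y : Set (ℤ → A)} {N K : ℕ} {G : (ℤ → A) → (ℤ → A)}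

lemma isRightContinuation_id (W : Set ℤ) : IsRightContinuation Y W (Icc 1 0) id :=
  ⟨mapsTo_id Y, fun _ _ => eqOn_refl _ _, fun _ _ _ _ _ => by simp⟩

lemma IsRightContinuation.eqOn_Icc (hG : IsRightContinuation Y (Icc (-N) 0) (Icc 1 K) G)
    {y y' : ℤ → A} (hy : y ∈ Y) (hy' : y' ∈ Y) (h : EqOn y y' (Icc (-N) 0)) :
    EqOn (G y) (G y') (Icc (-N) K) := by
  intro i hi
  rcases le_or_gt i 0 with hi0 | hi0
  · rw [hG.eqOn_Iic y hy hi0, hG.eqOn_Iic y' hy' hi0]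
    exact h ⟨hi.1, hi0⟩
  · exact hG.eqOn_of_eqOn y hy y' hy' h ⟨hi0, hi.2⟩

lemma IsRightContinuation.eqOn_Iic_of_eqOn
    (hG : IsRightContinuation Y (Icc (-N) 0) (Icc 1 K) G) {y y' : ℤ → A} (hy : y ∈ Y)
    (hy' : y' ∈ Y) (h : EqOn y y' (Iic 0)) : EqOn (G y) (G y') (Iic K) := by
  intro i hi
  rcases le_or_gt i 0 with hi0 | hi0
  · rw [hG.eqOn_Iic y hy hi0, hG.eqOn_Iic y' hy' hi0]
    exact h hi0
  · exact hG.eqOn_of_eqOn y hy y' hy' (h.mono Icc_subset_Iic_self) ⟨hi0, hi⟩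

lemma IsRightContinuation.extend [TopologicalSpace A] (hY : IsSubshift Y)
    (hG : IsRightContinuation Y (Icc (-N) 0) (Icc 1 K) G) {c : (ℤ → A) → (ℤ → A)}
    (hc : IsRightContinuation Y (Icc (-N) 0) {1} c) :
    IsRightContinuation Y (Icc (-N) 0) (Icc 1 (K + 1))
      (fun y => shiftBy (-K) (c (shiftBy K (G y)))) := by
  have hmem : ∀ y ∈ Y, shiftBy K (G y) ∈ Y := fun y hy => hY.shiftBy_mem _ (hG.mapsTo hy)
  have hle : ∀ y ∈ Y, ∀ i ≤ (K : ℤ), shiftBy (-K) (c (shiftBy K (G y))) i = G y i := by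
    intro y hy i hi
    simpa using hc.eqOn_Iic _ (hmem y hy) (show i + -K ≤ 0 by omega)
  refine ⟨fun y hy => hY.shiftBy_mem _ (hc.mapsTo (hmem y hy)), fun y hy i hi => ?_,
    fun y hy y' hy' h i hi => ?_⟩
  · rw [hle y hy i (by simp at hi; omega)]
    exact hG.eqOn_Iic y hy hi
  · obtain ⟨hi1, hi2⟩ := hi
    rcases lt_or_eq_of_le hi2 with hiK | rfl
    · rw [hle y hy i (by omega), hle y' hy' i (by omega)]
      exact hG.eqOn_of_eqOn y hy y' hy' h ⟨hi1, by omega⟩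
    · have := hc.eqOn_of_eqOn _ (hmem y hy) _ (hmem y' hy')
        (fun j hj => hG.eqOn_Icc hy hy' h ⟨by simp at hj; omega, by simp at hj; omega⟩)
        (mem_singleton 1)
      simpa using this

lemma IsRightContinuation.exists_iterate [TopologicalSpace A] (hY : IsSubshift Y)
    {c : (ℤ → A) → (ℤ → A)} (hc : IsRightContinuation Y (Icc (-N) 0) {1} c) (K : ℕ) :
    ∃ G, IsRightContinuation Y (Icc (-N) 0) (Icc 1 K) G := by
  induction K with
  | zero => exact ⟨id, isRightContinuation_id _⟩
  | succ K ih =>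
    obtain ⟨G, hG⟩ := ih
    exact ⟨_, by exact_mod_cast hG.extend hY hc⟩

end Continuation

section PropertyG

variable {B : Type*} [TopologicalSpace B] [DiscreteTopology B] [Finite B] {Y : Set (ℤ → B)}

omit [TopologicalSpace B] [DiscreteTopology B] [Finite B] in
lemma omega1_lastWord_mono (u : ℕ → B) {m n : ℕ} (h : m ≤ n) :
    omega1 Y (lastWord u m) ⊆ omega1 Y (lastWord u n) := fun _ hσ x hx hends =>
  hσ x hx ((endsAtZero_lastWord_iff x u m).mpr fun k hk =>
    (endsAtZero_lastWord_iff x u n).mp hends k (hk.trans h))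

lemma PropertyG.exists_uniform (hY : IsSubshift Y) (hg : PropertyG Y) :
    ∃ N : ℕ, ∀ y ∈ Y, (omega1 Y (lastWord (fun k => y (-k)) N)).Nonempty := by
  let U : ℕ → Set (ℤ → B) := fun n =>
    {y | (omega1 Y (lastWord (fun k => y (-k)) n)).Nonempty}
  have hUopen : ∀ n, IsOpen (U n) := by
    intro n
    have : U n = (fun y : ℤ → B => fun j : Fin (n + 1) => y (-(j : ℤ))) ⁻¹'
        {w | (omega1 Y (List.ofFn fun j : Fin (n + 1) => w ⟨n - j, by omega⟩)).Nonempty} := rfl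
    rw [this]
    exact (isOpen_discrete _).preimage (continuous_pi fun j => continuous_apply _)
  have hcover : Y ⊆ ⋃ n, U n := fun y hy => by
    obtain ⟨σ, hσ⟩ := hg _ ⟨y, hy, fun n => rfl⟩
    obtain ⟨n, hn⟩ := mem_iUnion.mp hσ
    exact mem_iUnion.mpr ⟨n, σ, hn⟩
  have hmono : Monotone U := fun m n h y ⟨σ, hσ⟩ => ⟨σ, omega1_lastWord_mono _ h hσ⟩
  obtain ⟨N, hN⟩ := hY.2.1.isCompact.elim_directed_cover U hUopen hcover hmono.directed_le
  exact ⟨N, fun y hy => hN hy⟩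

lemma PropertyG.exists_isRightContinuation (hY : IsSubshift Y) (hg : PropertyG Y) :
    ∃ (N : ℕ) (c : (ℤ → B) → (ℤ → B)), IsRightContinuation Y (Icc (-N) 0) {1} c := by
  obtain ⟨N, hN⟩ := hg.exists_uniform hY
  have : Nonempty B := ⟨hY.1.some 0⟩
  let next : List B → B := fun w => Classical.epsilon (· ∈ omega1 Y w)
  have hnext : ∀ y, ∃ y', y ∈ Y →
      y' ∈ Y ∧ EqOn y' y (Iic 0) ∧ y' 1 = next (lastWord (fun k => y (-k)) N) := by
    intro y
    by_cases hy : y ∈ Y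
    · obtain ⟨y', hy', hle, h1⟩ := Classical.epsilon_spec (hN y hy) y hy
        ((endsAtZero_lastWord_iff _ _ _).mpr fun k _ => rfl)
      exact ⟨y', fun _ => ⟨hy', hle, by simpa using h1 0⟩⟩
    · exact ⟨y, fun h => absurd h hy⟩
  choose c hc using hnext
  refine ⟨N, c, fun y hy => (hc y hy).1, fun y hy => (hc y hy).2.1,
    fun y hy y' hy' h i hi => ?_⟩
  rw [mem_singleton_iff.mp hi, (hc y hy).2.2, (hc y' hy').2.2]
  simp only [lastWord]
  congr 2
  funext j
  exact h ⟨by omega, by omega⟩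

end PropertyG

namespace OneSidedConjugacy

variable {A B : Type*} {X : Set (ℤ → A)} {Y : Set (ℤ → B)} {s N K : ℕ}
  (c : OneSidedConjugacy X Y s)

def pullback (G : (ℤ → B) → (ℤ → B)) (x : ℤ → A) : ℤ → A :=
  c.invFun (G (c.toFun x))

variable {G : (ℤ → B) → (ℤ → B)}

lemma isRightContinuation_pullback (hG : IsRightContinuation Y (Icc (-N) 0) (Icc 1 K) G) :
    IsRightContinuation X (Icc (-(N + s)) (N + s)) (Icc 1 K) (c.pullback G) := by
  refine ⟨fun x hx => c.mapsTo_invFun (hG.mapsTo (c.mapsTo_toFun hx)), fun x hx i hi => ?_,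
    fun x hx x' hx' h i hi => ?_⟩
  · rw [pullback, c.invFun_apply_eq _ (hG.mapsTo (c.mapsTo_toFun hx)) _ (c.mapsTo_toFun hx) i
      fun j hj => hG.eqOn_Iic _ (c.mapsTo_toFun hx) (hj.2.trans hi), c.left_inv x hx]
  · have hΦ : EqOn (c.toFun x) (c.toFun x') (Icc (-(N + s)) N) := fun j hj =>
      c.toFun_apply_eq x hx x' hx' j fun t ht => h ⟨by grind, by grind⟩
    refine c.invFun_apply_eq _ (hG.mapsTo (c.mapsTo_toFun hx)) _ (hG.mapsTo (c.mapsTo_toFun hx'))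
      i fun j hj => ?_
    rcases le_or_gt j 0 with hj0 | hj0
    · rw [hG.eqOn_Iic _ (c.mapsTo_toFun hx) hj0, hG.eqOn_Iic _ (c.mapsTo_toFun hx') hj0]
      exact hΦ ⟨by grind, by grind⟩
    · exact hG.eqOn_of_eqOn _ (c.mapsTo_toFun hx) _ (c.mapsTo_toFun hx')
        (hΦ.mono (Icc_subset_Icc (by omega) (by omega))) ⟨hj0, hj.2.trans hi.2⟩

lemma pullback_shiftBy_pullback [TopologicalSpace A] (hX : IsSubshift X)
    (hG : IsRightContinuation Y (Icc (-N) 0) (Icc 1 K) G) {x : ℤ → A} (hx : x ∈ X) (n : ℕ) :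
    EqOn (c.pullback G (shiftBy (-n) (c.pullback G x))) (c.pullback G (shiftBy (-n) x))
      (Icc 1 K) := by
  have hΦx := c.mapsTo_toFun hx
  have hGΦx := hG.mapsTo hΦx
  have hFx : c.pullback G x ∈ X := c.mapsTo_invFun hGΦx
  have hpast : EqOn (c.toFun (shiftBy (-n) (c.pullback G x))) (c.toFun (shiftBy (-n) x))
      (Iic 0) := by
    intro j hj
    rw [c.toFun_shiftBy _ hFx, c.toFun_shiftBy _ hx, pullback, c.right_inv _ hGΦx]
    exact hG.eqOn_Iic _ hΦx (show j + -n ≤ 0 by rw [mem_Iic] at hj; omega)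
  intro i hi
  exact c.invFun_apply_eq _ (hG.mapsTo (c.mapsTo_toFun (hX.shiftBy_mem _ hFx))) _
    (hG.mapsTo (c.mapsTo_toFun (hX.shiftBy_mem _ hx))) i fun j hj =>
      hG.eqOn_Iic_of_eqOn (c.mapsTo_toFun (hX.shiftBy_mem _ hFx))
        (c.mapsTo_toFun (hX.shiftBy_mem _ hx)) hpast (hj.2.trans hi.2)

end OneSidedConjugacy

section RIMap

variable {A : Type*} {X : Set (ℤ → A)} {L : ℕ} {F : (ℤ → A) → (ℤ → A)}

def centralBlock (L : ℕ) (x : ℤ → A) : Fin (2 * L + 1) → A := fun k => x (k - L)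

lemma centralBlock_eq_iff {x x' : ℤ → A} :
    centralBlock L x = centralBlock L x' ↔ EqOn x x' (Icc (-L) L) := by
  refine ⟨fun h i hi => ?_, fun h => funext fun k => h ⟨by omega, by omega⟩⟩
  have := congrFun h ⟨(i + L).toNat, by simp at hi; omega⟩
  simp only [centralBlock] at this
  rwa [show (((i + L).toNat : ℕ) : ℤ) - L = i by simp at hi; omega] at this

open Classical in
noncomputable def continuationBlockMap (X : Set (ℤ → A)) (L : ℕ)
    (F : (ℤ → A) → (ℤ → A)) (w : Fin (2 * L + 1) → A) : Fin (L + 1) → A :=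
  if h : ∃ x ∈ X, centralBlock L x = w then fun j => F h.choose (j + 1) else fun _ => w 0

lemma continuationBlockMap_centralBlock
    (hF : IsRightContinuation X (Icc (-L) L) (Icc 1 (L + 1)) F) {x : ℤ → A} (hx : x ∈ X)
    (j : Fin (L + 1)) : continuationBlockMap X L F (centralBlock L x) j = F x (j + 1) := by
  have h : ∃ x' ∈ X, centralBlock L x' = centralBlock L x := ⟨x, hx, rfl⟩
  rw [continuationBlockMap, dif_pos h]
  exact hF.eqOn_of_eqOn _ h.choose_spec.1 _ hx (centralBlock_eq_iff.mp h.choose_spec.2)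
    ⟨by omega, by omega⟩

lemma isRIMap_continuationBlockMap [TopologicalSpace A] (hX : IsSubshift X)
    (hF : IsRightContinuation X (Icc (-L) L) (Icc 1 (L + 1)) F)
    (hcons : ∀ x ∈ X, ∀ n : ℕ,
      EqOn (F (shiftBy (-n) (F x))) (F (shiftBy (-n) x)) (Icc 1 (L + 1))) :
    IsRIMap X L (continuationBlockMap X L F) := by
  refine ⟨fun x hx => ⟨F x, hF.mapsTo hx, fun i hi => hF.eqOn_Iic x hx hi,
    fun j => (continuationBlockMap_centralBlock hF hx j).symm⟩, ?_⟩
  rintro n - b ⟨x, hx, hb⟩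
  obtain rfl : b = fun j : Fin (2 * L + n + 1) => x (j - L - n) := funext fun j => (hb j).symm
  funext j
  calc _ = continuationBlockMap X L F (centralBlock L (shiftBy (-n) (F x))) j := by
        congr 2
        funext i
        split_ifs with hi
        · simp only [centralBlock, shiftBy_apply]
          rw [hF.eqOn_Iic x hx (show (i : ℤ) - L + -n ≤ 0 by omega)]
          congr 1
        · rw [show (fun k : Fin (2 * L + 1) => x ((n + k : ℕ) - L - n)) = centralBlock L x by
            funext k; simp only [centralBlock]; congr 1; push_cast; ring,
            continuationBlockMap_centralBlock hF hx]
          simp only [centralBlock, shiftBy_apply]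
          congr 1; omega
    _ = F (shiftBy (-n) (F x)) (j + 1) :=
        continuationBlockMap_centralBlock hF (hX.shiftBy_mem _ (hF.mapsTo hx)) j
    _ = F (shiftBy (-n) x) (j + 1) := hcons x hx n ⟨by omega, by omega⟩
    _ = continuationBlockMap X L F (centralBlock L (shiftBy (-n) x)) j :=
        (continuationBlockMap_centralBlock hF (hX.shiftBy_mem _ hx) j).symm
    _ = _ := by congr 2

end RIMap

theorem PropertyG.propertyRI_of_conjugate {A B : Type*} [TopologicalSpace A]
    [DiscreteTopology A] [Finite A] [TopologicalSpace B] [DiscreteTopology B] [Finite B]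
    {X : Set (ℤ → A)} {Y : Set (ℤ → B)} (hX : IsSubshift X) (hY : IsSubshift Y)
    (hXY : Conjugate X Y) (hg : PropertyG Y) : PropertyRI X := by
  obtain ⟨s, ⟨φ⟩⟩ := hXY.exists_oneSidedConjugacy hX hY
  obtain ⟨N, c, hc⟩ := hg.exists_isRightContinuation hY
  obtain ⟨G, hG⟩ := hc.exists_iterate hY (N + s + 1)
  exact ⟨N + s, _, isRIMap_continuationBlockMap hX
    (by exact_mod_cast φ.isRightContinuation_pullback hG)
    fun x hx n => by exact_mod_cast φ.pullback_shiftBy_pullback hX hG hx n⟩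

section Recoding

variable {A B : Type*} [TopologicalSpace A] [TopologicalSpace B] {X : Set (ℤ → A)}

lemma IsSubshift.image [CompactSpace A] [T2Space B] {f : (ℤ → A) → (ℤ → B)}
    (hX : IsSubshift X) (hf : Continuous f) (hshift : ∀ x, f (shiftMap x) = shiftMap (f x)) :
    IsSubshift (f '' X) := by
  refine ⟨hX.1.image f, (hX.2.1.isCompact.image hf).isClosed, ?_⟩
  rw [image_image, ← image_congr fun x _ => hshift x, ← image_image, hX.2.2]

lemma conjugate_image {f : (ℤ → A) → (ℤ → B)} {g : (ℤ → B) → (ℤ → A)}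
    (hgf : LeftInverse g f) (hf : Continuous f) (hg : Continuous g)
    (hshift : ∀ x, f (shiftMap x) = shiftMap (f x)) :
    Conjugate X (f '' X) :=
  ⟨(hgf.isEmbedding hg hf).homeomorphImage X, fun x _ => hshift x.1⟩

end Recoding

section RIRecoding

variable {A C : Type*} {X : Set (ℤ → A)} {L : ℕ}
  {Ψ : (Fin (2 * L + 1) → A) → (Fin (L + 1) → A)}

lemma IsRIMap.apply_centralBlock_continuation [TopologicalSpace A] (hΨ : IsRIMap X L Ψ)
    {x x' : ℤ → A} (hx : x ∈ X) (hle : ∀ i ≤ 0, x' i = x i)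
    (hval : ∀ j : Fin (L + 1), x' ((j : ℕ) + 1) = Ψ (centralBlock L x) j) {i : ℤ}
    (hi : i ≤ 0) : Ψ (centralBlock L (shiftBy i x')) = Ψ (centralBlock L (shiftBy i x)) := by
  obtain ⟨n, rfl⟩ : ∃ n : ℕ, i = -n := ⟨i.natAbs, by omega⟩
  by_cases hn : n < L
  -- (RIb) for the block `x_{[-L-n, L]}`
  · convert hΨ.2 n hn _ ⟨x, hx, fun j => rfl⟩ using 2 <;> funext k
    · simp only [centralBlock, shiftBy_apply]
      split_ifs with hk
      · rw [hle _ (by omega)]; rfl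
      · have h := hval ⟨(k : ℕ) - (L + n) - 1, by omega⟩
        rw [Fin.val_mk] at h
        rw [show ((k : ℕ) : ℤ) - L + -n = (((k : ℕ) - (L + n) - 1 : ℕ) : ℤ) + 1 by omega,
          h]
        congr 2
        funext t
        simp only [centralBlock]
        congr 1; push_cast; ring
    · rfl
  · exact congrArg Ψ (centralBlock_eq_iff.mpr fun t ht => hle _ (by simp at ht ⊢; omega))

variable (L) in
def riCode (e : A × (Fin (L + 1) → A) ≃ C)
    (Ψ : (Fin (2 * L + 1) → A) → (Fin (L + 1) → A)) (x : ℤ → A) : ℤ → C :=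
  fun i => e (x i, Ψ (centralBlock L (shiftBy i x)))

variable (e : A × (Fin (L + 1) → A) ≃ C)

lemma riCode_shiftMap (x : ℤ → A) :
    riCode L e Ψ (shiftMap x) = shiftMap (riCode L e Ψ x) := by
  funext i
  simp only [riCode, shiftMap_eq_shiftBy, shiftBy_shiftBy, shiftBy_apply]

lemma leftInverse_riCode : LeftInverse (fun y i => (e.symm (y i)).1) (riCode L e Ψ) := fun x => by
  funext i; simp [riCode]

lemma continuous_riCode [TopologicalSpace A] [DiscreteTopology A] [Finite A] [TopologicalSpace C] :
    Continuous (riCode L e Ψ) :=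
  continuous_pi fun i => continuous_of_discreteTopology.comp ((continuous_apply i).prodMk
    (continuous_of_discreteTopology.comp (continuous_pi fun _ => continuous_apply _)))

lemma riCode_one_eq_of_continuation {x x' z z' : ℤ → A} (hx : ∀ i ≤ 0, x' i = x i)
    (hx' : ∀ j : Fin (L + 1), x' ((j : ℕ) + 1) = Ψ (centralBlock L x) j)
    (hz : ∀ i ≤ 0, z' i = z i)
    (hz' : ∀ j : Fin (L + 1), z' ((j : ℕ) + 1) = Ψ (centralBlock L z) j)
    (h : EqOn (riCode L e Ψ x) (riCode L e Ψ z) (Icc (-L) 0)) :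
    riCode L e Ψ x' 1 = riCode L e Ψ z' 1 := by
  have hxz : EqOn x z (Icc (-L) 0) := fun i hi => congrArg Prod.fst (e.injective (h hi))
  have hΨxz : Ψ (centralBlock L x) = Ψ (centralBlock L z) := by
    simpa [riCode] using congrArg Prod.snd (e.injective (h ⟨by omega, le_rfl⟩))
  have hx'z' : EqOn x' z' (Icc (1 - L) (L + 1)) := by
    intro i ⟨hi₁, hi₂⟩
    rcases le_or_gt i 0 with hi | hi
    · rw [hx i hi, hz i hi]
      exact hxz ⟨by omega, hi⟩
    · obtain ⟨j, rfl⟩ : ∃ j : Fin (L + 1), i = (j : ℕ) + 1 :=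
        ⟨⟨(i - 1).toNat, by omega⟩, by simp; omega⟩
      rw [hx' j, hz' j, hΨxz]
  simp only [riCode]
  rw [hx'z' ⟨by omega, by omega⟩,
    (centralBlock_eq_iff (x := shiftBy 1 x') (x' := shiftBy 1 z')).mpr fun t ht =>
      hx'z' ⟨by simp at ht ⊢; omega, by simp at ht ⊢; omega⟩]

lemma IsRIMap.propertyG_image_riCode [TopologicalSpace A] (hΨ : IsRIMap X L Ψ) :
    PropertyG (riCode L e Ψ '' X) := by
  rintro u ⟨_, ⟨x₀, hx₀, rfl⟩, hu⟩
  obtain ⟨x₀', -, hle₀, hval₀⟩ := hΨ.1 x₀ hx₀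
  refine ⟨riCode L e Ψ x₀' 1, mem_iUnion.mpr ⟨L, ?_⟩⟩
  rintro _ ⟨x, hx, rfl⟩ hends
  obtain ⟨x', hx', hle, hval⟩ := hΨ.1 x hx
  have hpast : EqOn (riCode L e Ψ x) (riCode L e Ψ x₀) (Icc (-L) 0) := fun i hi => by
    obtain ⟨k, hk, rfl⟩ : ∃ k : ℕ, k ≤ L ∧ -(k : ℤ) = i :=
      ⟨i.natAbs, by simp at hi; omega, by simp at hi; omega⟩
    rw [(endsAtZero_lastWord_iff _ u L).mp hends k hk, hu]
  refine ⟨riCode L e Ψ x', mem_image_of_mem _ hx', fun i hi => ?_, fun j => ?_⟩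
  · simp only [riCode, hle i hi, hΨ.apply_centralBlock_continuation hx hle hval hi]
  · obtain rfl : j = 0 := Fin.fin_one_eq_zero j
    simpa using riCode_one_eq_of_continuation e hle hval hle₀ hval₀ hpast

end RIRecoding

theorem PropertyRI.exists_conjugate_propertyG {A : Type*} [Fintype A] [TopologicalSpace A]
    [DiscreteTopology A] {X : Set (ℤ → A)} (hX : IsSubshift X) (hRI : PropertyRI X) :
    ∃ (m : ℕ) (Y : Set (ℤ → Fin m)), IsSubshift Y ∧ Conjugate X Y ∧ PropertyG Y := by
  obtain ⟨L, Ψ, hΨ⟩ := hRI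
  let e := Fintype.equivFin (A × (Fin (L + 1) → A))
  have hdec : Continuous fun (y : ℤ → Fin _) i => (e.symm (y i)).1 :=
    continuous_pi fun i => (continuous_of_discreteTopology (f := fun b => (e.symm b).1)).comp
      (continuous_apply i)
  exact ⟨_, riCode L e Ψ '' X, hX.image (continuous_riCode e) (riCode_shiftMap e),
    conjugate_image (leftInverse_riCode e) (continuous_riCode e) hdec (riCode_shiftMap e),
    hΨ.propertyG_image_riCode e⟩

theorem stmt11_general {A : Type*} [Fintype A] [TopologicalSpace A] [DiscreteTopology A]
    (X : Set (ℤ → A)) (hX : IsSubshift X) :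
    (∃ (m : ℕ) (Y : Set (ℤ → Fin m)), IsSubshift Y ∧ Conjugate X Y ∧ PropertyG Y) ↔
      PropertyRI X :=
  ⟨fun ⟨_, _, hY, hXY, hg⟩ => hg.propertyRI_of_conjugate hX hY hXY,
    fun hRI => hRI.exists_conjugate_propertyG hX⟩

/-- Proposition 4.2.  A subshift admits a presentation with property g
(i.e. is topologically conjugate to a subshift with property g) if and only if it has
property RI. -/
theorem stmt11 {A : Type*} [Fintype A] [Nonempty A] [TopologicalSpace A] [DiscreteTopology A]
    (X : Set (ℤ → A)) (hX : IsSubshift X) :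
    (∃ (m : ℕ) (Y : Set (ℤ → Fin m)), IsSubshift Y ∧ Conjugate X Y ∧ PropertyG Y) ↔
      PropertyRI X :=
  stmt11_general X hX
end

section
/- For every n ∈ ℕ, a subshift X ⊆ Σ^ℤ has property (D) if and only if its n-block system X^[n] has property (D). -/
open Set Filter Topology

/-- The `n`-block map, sending `x` to the sequence of its `n`-blocks. -/
def blockMap {A : Type*} (n : ℕ) (x : ℤ → A) : ℤ → (Fin n → A) :=
  fun i j => x (i + ((j : ℕ) : ℤ))

/-- The `n`-block system of `X`, a subshift over the alphabet of `n`-blocks. -/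
def blockSystem {A : Type*} (X : Set (ℤ → A)) (n : ℕ) : Set (ℤ → (Fin n → A)) :=
  blockMap n '' X

/-- A subshift is right instantaneous if `ω₁⁺(λ) ≠ ∅` for every letter `λ` occurring in
one of its points. -/
def RightInstantaneous {B : Type*} (Y : Set (ℤ → B)) : Prop :=
  ∀ β : B, Admissible Y [β] → (omega1 Y [β]).Nonempty

/-! Write `n = m + 1`. Every admissible word is a window of a point of `X`, and the block map
turns the window of length `L + m` of `x` into the window of length `L` of `blockMap n x`, in a
way that can be inverted as soon as `L ≥ 1`. Under this dictionary a block `β` lies in `ω₁⁺` of a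
block word exactly when its first `m` letters are the last `m` letters of the underlying word and
its last letter lies in `ω₁⁺` of that word, read as ending at coordinate `m` instead of `0`; shift
invariance of `X` makes the coordinate irrelevant. Property (D) is then transported in both
directions, extending the given word `m` letters to the left when passing from `X` to `X^[n]`. -/

section Window

variable {A : Type*} {X : Set (ℤ → A)}

def window (x : ℤ → A) (i : ℤ) (L : ℕ) : List A :=
  List.ofFn fun q : Fin L => x (i + q)

@[simp]
lemma length_window (x : ℤ → A) (i : ℤ) (L : ℕ) : (window x i L).length = L := by
  simp [window]

lemma window_eq_window_iff {x x' : ℤ → A} {i i' : ℤ} {L : ℕ} :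
    window x i L = window x' i' L ↔ ∀ q < L, x (i + q) = x' (i' + q) := by
  simp only [window, List.ofFn_inj, funext_iff]
  exact ⟨fun h q hq => h ⟨q, hq⟩, fun h q => h q q.isLt⟩

lemma window_add (x : ℤ → A) (i : ℤ) (L M : ℕ) :
    window x i (L + M) = window x i L ++ window x (i + L) M := by
  simp only [window, List.ofFn_add]
  congr 2 with q
  simp only [Fin.val_natAdd]
  push_cast
  ring_nf

lemma window_one (x : ℤ → A) (i : ℤ) : window x i 1 = [x i] := by
  simp [window]

lemma window_succ (x : ℤ → A) (i : ℤ) (L : ℕ) :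
    window x i (L + 1) = window x i L ++ [x (i + L)] := by
  rw [window_add, window_one]

lemma window_add_eq_append_iff {x : ℤ → A} {i : ℤ} {L M : ℕ} {u v : List A}
    (hu : u.length = L) :
    window x i (L + M) = u ++ v ↔ window x i L = u ∧ window x (i + L) M = v := by
  rw [window_add]
  exact ⟨fun h => List.append_inj h (by simp [hu]), fun ⟨h₁, h₂⟩ => h₁ ▸ h₂ ▸ rfl⟩

lemma window_shift (x : ℤ → A) (c i : ℤ) (L : ℕ) :
    window (fun j => x (j + c)) i L = window x (i + c) L := by
  simp only [window_eq_window_iff]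
  intro q _
  ring_nf

lemma occurs_iff_window {w : List A} {x : ℤ → A} :
    Occurs w x ↔ ∃ i, window x i w.length = w := by
  simp only [Occurs, window, List.ext_get_iff, List.length_ofFn, List.get_ofFn, true_and]
  refine exists_congr fun i => ⟨fun h q hq _ => h ⟨q, hq⟩, fun h q => h q q.isLt (by simp)⟩

lemma endsAtZero_iff_window {w : List A} {x : ℤ → A} :
    EndsAtZero x w ↔ window x (1 - w.length) w.length = w := by
  simp only [EndsAtZero, window, List.ext_get_iff, List.length_ofFn, List.get_ofFn, true_and]
  refine ⟨fun h q hq _ => ?_, fun h q => ?_⟩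
  · simpa [show (1 : ℤ) - w.length + q = q - (w.length - 1) by ring] using h ⟨q, hq⟩
  · simpa [show (1 : ℤ) - w.length + q = q - (w.length - 1) by ring] using h q q.isLt (by simp)

lemma admissible_window {x : ℤ → A} (hx : x ∈ X) (i : ℤ) (L : ℕ) :
    Admissible X (window x i L) :=
  ⟨x, hx, occurs_iff_window.mpr ⟨i, by rw [length_window]⟩⟩

end Window

section Shift

variable {A : Type*} {X : Set (ℤ → A)}

lemma shift_mem (hX : shiftMap '' X = X) {x : ℤ → A} (hx : x ∈ X) (c : ℤ) :
    (fun j => x (j + c)) ∈ X := by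
  induction c using Int.induction_on generalizing x with
  | zero => simpa using hx
  | succ c ih =>
    rw [← hX]
    exact ⟨_, ih hx, funext fun j => by simp only [shiftMap]; ring_nf⟩
  | pred c ih =>
    rw [← hX] at hx
    obtain ⟨x', hx', rfl⟩ := hx
    convert ih hx' using 2 with j
    simp only [shiftMap]; ring_nf

def omega1At (X : Set (ℤ → A)) (c : ℤ) (w : List A) : Set A :=
  {σ | ∀ x ∈ X, window x (c + 1 - w.length) w.length = w →
    ∃ x' ∈ X, (∀ j ≤ c, x' j = x j) ∧ x' (c + 1) = σ}

lemma omega1_eq_omega1At_zero (X : Set (ℤ → A)) (w : List A) : omega1 X w = omega1At X 0 w := by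
  ext σ
  simp only [omega1, OmegaWord, omega1At, endsAtZero_iff_window, zero_add, Set.mem_ofPred_eq]
  refine forall₂_congr fun x _ => imp_congr_right fun _ => exists_congr fun x' => ?_
  simp

lemma omega1At_subset_omega1At (hX : shiftMap '' X = X) (c d : ℤ) (w : List A) :
    omega1At X c w ⊆ omega1At X d w := by
  intro σ hσ x hx hw
  obtain ⟨x', hx', hagree, hnext⟩ :=
    hσ _ (shift_mem hX hx (d - c)) (by rw [window_shift, ← hw, length_window]; ring_nf)
  refine ⟨_, shift_mem hX hx' (c - d), fun j hj => ?_, ?_⟩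
  · have := hagree (j + (c - d)) (by omega)
    rwa [show j + (c - d) + (d - c) = j by ring] at this
  · rwa [show d + 1 + (c - d) = c + 1 by ring]

lemma omega1_eq_omega1At (hX : shiftMap '' X = X) (c : ℤ) (w : List A) :
    omega1 X w = omega1At X c w := by
  rw [omega1_eq_omega1At_zero]
  exact (omega1At_subset_omega1At hX 0 c w).antisymm (omega1At_subset_omega1At hX c 0 w)

end Shift

section Block

variable {A : Type*} {X : Set (ℤ → A)} {m : ℕ}

lemma blockMap_mem_blockSystem {n : ℕ} {x : ℤ → A} (hx : x ∈ X) :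
    blockMap n x ∈ blockSystem X n :=
  Set.mem_image_of_mem _ hx

lemma window_blockMap_eq_of_window_eq {x x' : ℤ → A} {i i' : ℤ} {L : ℕ}
    (h : window x i (L + m) = window x' i' (L + m)) :
    window (blockMap (m + 1) x) i L = window (blockMap (m + 1) x') i' L := by
  simp only [window_eq_window_iff, blockMap, funext_iff, Fin.forall_iff] at h ⊢
  intro q hq k hk
  have := h (q + k) (by omega)
  push_cast at this
  rwa [← add_assoc, ← add_assoc] at this

lemma window_eq_of_window_blockMap_eq {x x' : ℤ → A} {i i' : ℤ} {L : ℕ} (hL : 1 ≤ L)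
    (h : window (blockMap (m + 1) x) i L = window (blockMap (m + 1) x') i' L) :
    window x i (L + m) = window x' i' (L + m) := by
  simp only [window_eq_window_iff, blockMap, funext_iff, Fin.forall_iff] at h ⊢
  intro q hq
  -- split `q` as a block position `j < L` plus an offset `k ≤ m` inside the block
  have := h (min q (L - 1)) (by omega) (q - min q (L - 1)) (by omega)
  rwa [add_assoc, add_assoc, show ((min q (L - 1) : ℕ) : ℤ) + ((q - min q (L - 1) : ℕ) : ℤ) = q by
    omega] at this

lemma blockMap_eq_blockMap_of_le_iff {x z : ℤ → A} {c : ℤ} :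
    (∀ j ≤ c, blockMap (m + 1) z j = blockMap (m + 1) x j) ↔ ∀ j ≤ c + m, z j = x j := by
  simp only [blockMap, funext_iff, Fin.forall_iff]
  constructor
  · intro h j hj
    simpa using h (j - m) (by omega) m (by omega)
  · intro h j hj k hk
    exact h _ (by omega)

lemma blockMap_apply_last (x : ℤ → A) (j : ℤ) : blockMap (m + 1) x j (Fin.last m) = x (j + m) :=
  rfl

lemma mem_omega1_of_mem_omega1_blockSystem (hX : shiftMap '' X = X) {u : ℤ → A} {i : ℤ}
    {L : ℕ} {β : Fin (m + 1) → A}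
    (hβ : β ∈ omega1 (blockSystem X (m + 1)) (window (blockMap (m + 1) u) i L)) :
    β (Fin.last m) ∈ omega1 X (window u i (L + m)) := by
  rw [omega1_eq_omega1At_zero] at hβ
  rw [omega1_eq_omega1At hX m]
  intro x hx hw
  have hstart : (m : ℤ) + 1 - ((window u i (L + m)).length : ℕ) = 0 + 1 - L := by
    rw [length_window]; push_cast; ring
  rw [hstart, length_window] at hw
  obtain ⟨_, ⟨z, hz, rfl⟩, hagree, hnext⟩ :=
    hβ _ ⟨x, hx, rfl⟩ (by rw [length_window]; exact window_blockMap_eq_of_window_eq hw)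
  refine ⟨z, hz, by simpa using blockMap_eq_blockMap_of_le_iff.mp hagree, ?_⟩
  rw [← hnext, blockMap_apply_last, zero_add, add_comm]

lemma mem_omega1_blockSystem_of_mem_omega1 (hX : shiftMap '' X = X) {u : ℤ → A} {i : ℤ}
    {L : ℕ} (hL : 1 ≤ L) {β : Fin (m + 1) → A}
    (hinit : ∀ k : Fin m, β k.castSucc = u (i + L + k))
    (hlast : β (Fin.last m) ∈ omega1 X (window u i (L + m))) :
    β ∈ omega1 (blockSystem X (m + 1)) (window (blockMap (m + 1) u) i L) := by
  rw [omega1_eq_omega1At hX m] at hlast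
  rw [omega1_eq_omega1At_zero]
  rintro _ ⟨x, hx, rfl⟩ hw
  rw [length_window] at hw
  have hxu := window_eq_of_window_blockMap_eq hL hw
  have hstart : (m : ℤ) + 1 - ((window u i (L + m)).length : ℕ) = 0 + 1 - L := by
    rw [length_window]; push_cast; ring
  obtain ⟨z, hz, hagree, hnext⟩ := hlast x hx (by rw [hstart, length_window, hxu])
  refine ⟨blockMap (m + 1) z, ⟨z, hz, rfl⟩, blockMap_eq_blockMap_of_le_iff.mpr
    (by simpa using hagree), funext fun k => ?_⟩
  induction k using Fin.lastCases with
  | last => rw [← hnext, blockMap_apply_last, zero_add, add_comm]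
  | cast k =>
    have hx : x (1 + k) = u (i + L + k) := by
      have := window_eq_window_iff.mp hxu (L + k) (by omega)
      simp only [Nat.cast_add, ← add_assoc] at this
      rwa [sub_add_cancel] at this
    rw [hinit, ← hx]
    simpa [blockMap] using hagree (1 + k) (by omega)

end Block

section PropertyD

variable {A : Type*} {X : Set (ℤ → A)} {m : ℕ}

lemma propertyD_blockSystem (hX : shiftMap '' X = X) (hD : PropertyD X) :
    PropertyD (blockSystem X (m + 1)) := by
  rintro B β hB ⟨_, ⟨x, hx, rfl⟩, hocc⟩
  obtain ⟨i, hi⟩ := occurs_iff_window.mp hocc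
  rw [List.length_append, List.length_singleton, window_add_eq_append_iff rfl, window_one,
    List.singleton_inj] at hi
  obtain ⟨hB_eq, hβ⟩ := hi
  set L := B.length
  have hL : 1 ≤ L := List.length_pos_iff.mpr hB
  obtain ⟨a, ha, hadm, hσ⟩ := hD (window x i (L + m)) (x (i + L + m))
    (by rw [← List.length_pos_iff, length_window]; omega)
    (by rw [add_assoc, ← Nat.cast_add, ← window_succ]; exact admissible_window hx _ _)
  obtain ⟨x₂, hx₂, hocc₂⟩ := hadm
  obtain ⟨i₂, hab⟩ := occurs_iff_window.mp hocc₂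
  rw [List.length_append, length_window] at hab
  obtain ⟨-, hb⟩ := (window_add_eq_append_iff rfl).mp hab
  set p := a.length
  have hA : window (blockMap (m + 1) x₂) i₂ (p + L) = window (blockMap (m + 1) x₂) i₂ p ++ B := by
    rw [window_add, ← hB_eq, window_blockMap_eq_of_window_eq hb]
  refine ⟨window (blockMap (m + 1) x₂) i₂ p, ?_, ?_, ?_⟩
  · rw [← List.length_pos_iff, length_window]; exact List.length_pos_iff.mpr ha
  · exact hA ▸ admissible_window (blockMap_mem_blockSystem hx₂) _ _
  · rw [← hA]
    refine mem_omega1_blockSystem_of_mem_omega1 hX (by omega) (fun k => ?_) ?_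
    · have := window_eq_window_iff.mp hb (L + k) (by omega)
      rw [← hβ, blockMap, Fin.val_castSucc]
      push_cast at this ⊢
      rw [← add_assoc, ← add_assoc] at this
      rw [← this, add_assoc i₂]
    · rwa [← hβ, blockMap_apply_last, Nat.add_assoc, hab]

lemma propertyD_of_propertyD_blockSystem (hX : shiftMap '' X = X)
    (hD : PropertyD (blockSystem X (m + 1))) : PropertyD X := by
  rintro b σ hb ⟨x, hx, hocc⟩
  obtain ⟨i, hi⟩ := occurs_iff_window.mp hocc
  rw [List.length_append, List.length_singleton, window_add_eq_append_iff rfl, window_one,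
    List.singleton_inj] at hi
  obtain ⟨hb_eq, hσ⟩ := hi
  set L := b.length
  have hL : 1 ≤ L := List.length_pos_iff.mpr hb
  -- the blocks of `x` starting `m` letters before `b` cover `b` and end with `σ`
  obtain ⟨A', hA', hadm, hβ⟩ :=
    hD (window (blockMap (m + 1) x) (i - m) L) (blockMap (m + 1) x (i - m + L))
      (by rw [← List.length_pos_iff, length_window]; omega)
      (by rw [← window_succ]; exact admissible_window (blockMap_mem_blockSystem hx) _ _)
  obtain ⟨_, ⟨x₂, hx₂, rfl⟩, hocc₂⟩ := hadm
  obtain ⟨i₂, hAB⟩ := occurs_iff_window.mp hocc₂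
  rw [List.length_append, length_window] at hAB
  obtain ⟨-, hB⟩ := (window_add_eq_append_iff rfl).mp hAB
  set p := A'.length
  have hab : window x₂ i₂ (p + L + m) = (window x₂ i₂ p ++ window x (i - m) m) ++ b := by
    rw [Nat.add_assoc, window_add, window_eq_of_window_blockMap_eq hL hB, Nat.add_comm,
      window_add, sub_add_cancel, hb_eq, List.append_assoc]
  refine ⟨window x₂ i₂ p ++ window x (i - m) m, ?_, hab ▸ admissible_window hx₂ _ _, ?_⟩
  · rw [← List.length_pos_iff, List.length_append, length_window]
    exact Nat.add_pos_left (List.length_pos_iff.mpr hA') _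
  · have := mem_omega1_of_mem_omega1_blockSystem hX (hAB ▸ hβ)
    rwa [blockMap_apply_last, show i - m + L + m = i + L by ring, hσ, hab] at this

end PropertyD

theorem stmt13_general {A : Type*} [TopologicalSpace A]
    (X : Set (ℤ → A)) (hX : IsSubshift X) (n : ℕ) (hn : 1 ≤ n) :
    PropertyD X ↔ PropertyD (blockSystem X n) := by
  obtain ⟨m, rfl⟩ : ∃ m, n = m + 1 := ⟨n - 1, by omega⟩
  obtain ⟨-, -, hshift⟩ := hX
  exact ⟨propertyD_blockSystem hshift, propertyD_of_propertyD_blockSystem hshift⟩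

/-- For every `n ≥ 1`, a subshift has property (D) if and only if its
`n`-block system has property (D). -/
theorem stmt13 {A : Type*} [Fintype A] [Nonempty A] [TopologicalSpace A] [DiscreteTopology A]
    (X : Set (ℤ → A)) (hX : IsSubshift X) (n : ℕ) (hn : 1 ≤ n) :
    PropertyD X ↔ PropertyD (blockSystem X n) :=
  stmt13_general X hX n hn
end
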